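/- arXiv:1404.1940 — 2 statements merged into one kernel-verified Lean document; each statement's English description precedes it below -/
import Mathlib

section
/- Let b ∈ ℝ, a > 0, 0 < λ ≤ 1, n a positive integer, and d_0,…,d_{n−1} ∈ ℂ. Let f̂ : ℝ → ℂ be measurable and set g(ω) := e^{ibω} f̂(ω). Define, for ω > 0, G₊(ω) := g(ω) − Σ_{s=0}^{n−1} d_s ω^{s+λ−1} and G₋(ω) := g(−ω) − Σ_{s=0}^{n−1} d_s e^{iπ(s+λ−1)} ω^{s+λ−1}. Assume that the functions ω ↦ g(ω) ω² e^{−(aω)²/2}, ω ↦ g(−ω) ω² e^{−(aω)²/2}, ω ↦ G₊(ω) ω² e^{−(aω)²/2} and ω ↦ G₋(ω) ω² e^{−(aω)²/2} are integrable on (0,∞). Then (√a / 2π) ∫_ℝ e^{ibω} f̂(ω) · √(2π) (aω)² e^{−(aω)²/2} dω = (1/(2√π)) Σ_{s=0}^{n−1} d_s 2^{(s+λ+1)/2} Γ((s+λ+2)/2) (1 + e^{iπ(s+λ−1)}) a^{−s−λ+1/2} + δ_n(a), where δ_n(a) = (√a/√(2π)) ∫_0^∞ (G₊(ω) + G₋(ω))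 (aω)² e^{−(aω)²/2} dω. -/
open MeasureTheory Set Complex

/-!
Since `ψ̂` is real and even, the integral on the left is `√(2π) a² ∫_ℝ g(ω) ω² e^{−(aω)²/2} dω`,
and folding the line onto `(0, ∞)` turns this into the sum of the half-line integrals of `g(ω)`
and `g(−ω)` against the same weight. On each half-line, subtracting the expansion leaves the
remainder integral of `G₊` resp. `G₋` plus finitely many moments
`∫_0^∞ ω^{t+1} e^{−(aω)²/2} dω = 2^{t/2} Γ((t+2)/2) a^{−(t+2)}` (with `t = s + λ`), which are
Gamma integrals; the rest is bookkeeping of the constants.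
-/

theorem integral_eq_integral_Ioi_comp_neg_add_integral_Ioi {E : Type*} [NormedAddCommGroup E]
    [NormedSpace ℝ E] {f : ℝ → E} (hneg : IntegrableOn (fun x => f (-x)) (Ioi 0))
    (hpos : IntegrableOn f (Ioi 0)) :
    ∫ x, f x = (∫ x in Ioi 0, f (-x)) + ∫ x in Ioi 0, f x := by
  have hIic : IntegrableOn f (Iic 0) := by
    rw [integrableOn_Iic_iff_integrableOn_Iio, ← (Measure.measurePreserving_neg
      (volume : Measure ℝ)).integrableOn_comp_preimage (Homeomorph.neg ℝ).measurableEmbedding]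
    simpa only [Function.comp_def, neg_preimage, neg_Iio, neg_zero] using hneg
  rw [← intervalIntegral.integral_Iic_add_Ioi hIic hpos, integral_comp_neg_Ioi, neg_zero]

theorem setIntegral_mul_eq_setIntegral_remainder_add_sum {ι α : Type*} [MeasurableSpace α]
    {μ : Measure α} {s : Set α} (hs : MeasurableSet s) {S : Finset ι} {h G : α → ℂ}
    {c : ι → ℂ} {p : ι → α → ℝ} {w : α → ℝ}
    (hG : ∀ x ∈ s, G x = h x - ∑ i ∈ S, c i * (p i x : ℂ))
    (hGw : IntegrableOn (fun x => G x * (w x : ℂ)) s μ)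
    (hpw : ∀ i ∈ S, IntegrableOn (fun x => p i x * w x) s μ) :
    ∫ x in s, h x * (w x : ℂ) ∂μ
      = (∫ x in s, G x * (w x : ℂ) ∂μ) + ∑ i ∈ S, c i * ((∫ x in s, p i x * w x ∂μ : ℝ) : ℂ) := by
  have htand : EqOn (fun x => h x * (w x : ℂ))
      (fun x => G x * (w x : ℂ) + ∑ i ∈ S, c i * ((p i x * w x : ℝ) : ℂ)) s := by
    intro x hx
    simp only [hG x hx, ofReal_mul, sub_mul, Finset.sum_mul, mul_assoc]
    ring
  have hterm : ∀ i ∈ S, Integrable (fun x => c i * ((p i x * w x : ℝ) : ℂ)) (μ.restrict s) :=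
    fun i hi => (hpw i hi).ofReal.const_mul (c i)
  rw [setIntegral_congr_fun hs htand, integral_add hGw (integrable_finsetSum _ hterm),
    integral_finsetSum _ hterm]
  simp only [integral_const_mul, integral_complex_ofReal]

theorem rpow_sub_one_mul_sq_mul_exp_eq {a t x : ℝ} (hx : 0 < x) :
    x ^ (t - 1) * (x ^ 2 * Real.exp (-(a * x) ^ 2 / 2))
      = x ^ (t + 1) * Real.exp (-(a ^ 2 / 2) * x ^ (2 : ℝ)) := by
  rw [show t + 1 = t - 1 + 2 by ring, Real.rpow_add hx, Real.rpow_two]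
  ring_nf

theorem integrableOn_rpow_sub_one_mul_sq_mul_exp {a t : ℝ} (ha : a ≠ 0) (ht : -2 < t) :
    IntegrableOn (fun x : ℝ => x ^ (t - 1) * (x ^ 2 * Real.exp (-(a * x) ^ 2 / 2))) (Ioi 0) :=
  (integrableOn_rpow_mul_exp_neg_mul_rpow (by linarith : -1 < t + 1) two_pos
    (by positivity)).congr_fun (fun _ hx => (rpow_sub_one_mul_sq_mul_exp_eq hx).symm)
    measurableSet_Ioi

theorem integral_rpow_sub_one_mul_sq_mul_exp {a t : ℝ} (ha : 0 < a) (ht : -2 < t) :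
    ∫ x in Ioi 0, x ^ (t - 1) * (x ^ 2 * Real.exp (-(a * x) ^ 2 / 2))
      = 2 ^ (t / 2) * Real.Gamma ((t + 2) / 2) * a ^ (-(t + 2)) := by
  have hscale : (a ^ 2 / 2) ^ (-(t + 2) / 2) * (1 / 2) = 2 ^ (t / 2) * a ^ (-(t + 2)) := by
    rw [Real.div_rpow (by positivity) zero_le_two, ← Real.rpow_natCast, ← Real.rpow_mul ha.le,
      div_eq_mul_inv, ← Real.rpow_neg zero_le_two,
      show ((2 : ℕ) : ℝ) * (-(t + 2) / 2) = -(t + 2) by push_cast; ring,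
      show -(-(t + 2) / 2) = t / 2 + 1 by ring, Real.rpow_add two_pos, Real.rpow_one]
    ring
  rw [setIntegral_congr_fun measurableSet_Ioi (fun _ hx => rpow_sub_one_mul_sq_mul_exp_eq hx),
    _root_.integral_rpow_mul_exp_neg_mul_rpow two_pos (by linarith) (by positivity),
    show t + 1 + 1 = t + 2 by ring, hscale]
  ring

theorem setIntegral_Ioi_mul_sq_mul_exp_eq_remainder_add_sum {a lam : ℝ} (ha : 0 < a)
    (hlam : -2 < lam) {n : ℕ} {h G : ℝ → ℂ} {c : ℕ → ℂ}
    (hG : ∀ x ∈ Ioi (0 : ℝ),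
      G x = h x - ∑ s ∈ Finset.range n, c s * ((x ^ ((s : ℝ) + lam - 1) : ℝ) : ℂ))
    (hGw : IntegrableOn
      (fun x : ℝ => G x * ((x ^ 2 * Real.exp (-(a * x) ^ 2 / 2) : ℝ) : ℂ)) (Ioi 0)) :
    ∫ x in Ioi 0, h x * ((x ^ 2 * Real.exp (-(a * x) ^ 2 / 2) : ℝ) : ℂ)
      = (∫ x in Ioi 0, G x * ((x ^ 2 * Real.exp (-(a * x) ^ 2 / 2) : ℝ) : ℂ))
        + ∑ s ∈ Finset.range n, c s * ((2 ^ (((s : ℝ) + lam) / 2)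
            * Real.Gamma (((s : ℝ) + lam + 2) / 2) * a ^ (-((s : ℝ) + lam + 2)) : ℝ) : ℂ) := by
  have ht : ∀ s : ℕ, -2 < (s : ℝ) + lam := fun s => by linarith [s.cast_nonneg (α := ℝ)]
  rw [setIntegral_mul_eq_setIntegral_remainder_add_sum measurableSet_Ioi hG hGw
    fun s _ => integrableOn_rpow_sub_one_mul_sq_mul_exp ha.ne' (ht s)]
  simp only [integral_rpow_sub_one_mul_sq_mul_exp ha (ht _)]

theorem integral_mul_mexicanHat_eq {a : ℝ} {g : ℝ → ℂ}
    (hpos : IntegrableOn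
      (fun x : ℝ => g x * ((x ^ 2 * Real.exp (-(a * x) ^ 2 / 2) : ℝ) : ℂ)) (Ioi 0))
    (hneg : IntegrableOn
      (fun x : ℝ => g (-x) * ((x ^ 2 * Real.exp (-(a * x) ^ 2 / 2) : ℝ) : ℂ)) (Ioi 0)) :
    ∫ x, g x * ((Real.sqrt (2 * Real.pi) * (a * x) ^ 2 * Real.exp (-(a * x) ^ 2 / 2) : ℝ) : ℂ)
      = ((Real.sqrt (2 * Real.pi) * a ^ 2 : ℝ) : ℂ) *
        ((∫ x in Ioi 0, g (-x) * ((x ^ 2 * Real.exp (-(a * x) ^ 2 / 2) : ℝ) : ℂ))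
          + ∫ x in Ioi 0, g x * ((x ^ 2 * Real.exp (-(a * x) ^ 2 / 2) : ℝ) : ℂ)) := by
  have hsplit := integral_eq_integral_Ioi_comp_neg_add_integral_Ioi
    (by simpa only [mul_neg, neg_sq] using hneg) hpos
  simp only [mul_neg, neg_sq] at hsplit
  rw [← hsplit, ← integral_const_mul]
  congr 1 with x
  push_cast
  ring

theorem sqrt_div_sqrt_two_pi_mul_sq_mul_rpow {a : ℝ} (ha : 0 < a) (t γ : ℝ) :
    Real.sqrt a / Real.sqrt (2 * Real.pi) * a ^ 2 * (2 ^ (t / 2) * γ * a ^ (-(t + 2)))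
      = 1 / (2 * Real.sqrt Real.pi) * (2 ^ ((t + 1) / 2) * γ) * a ^ (-t + 1 / 2) := by
  have htwo : (2 : ℝ) ^ ((t + 1) / 2) = 2 ^ (t / 2) * Real.sqrt 2 := by
    rw [Real.sqrt_eq_rpow, ← Real.rpow_add two_pos]
    ring_nf
  have hpow : a ^ (-t + 1 / 2) = Real.sqrt a * a ^ 2 * a ^ (-(t + 2)) := by
    rw [Real.sqrt_eq_rpow, ← Real.rpow_natCast, ← Real.rpow_add ha, ← Real.rpow_add ha]
    ring_nf
  rw [htwo, hpow, Real.sqrt_mul zero_le_two]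
  field_simp
  rw [Real.sq_sqrt zero_le_two]

theorem mexicanHat_wavelet_expansion_general (b a lam : ℝ) (ha : 0 < a)
    (hlam0 : 0 < lam) (n : ℕ) (d : ℕ → ℂ)
    (fhat : ℝ → ℂ)
    (g Gp Gm : ℝ → ℂ)
    (hg : ∀ ω : ℝ, g ω = Complex.exp (Complex.I * b * ω) * fhat ω)
    (hGp : ∀ ω ∈ Ioi (0 : ℝ),
      Gp ω = g ω - ∑ s ∈ Finset.range n, d s * ((ω ^ ((s : ℝ) + lam - 1) : ℝ) : ℂ))
    (hGm : ∀ ω ∈ Ioi (0 : ℝ),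
      Gm ω = g (-ω) - ∑ s ∈ Finset.range n,
        d s * Complex.exp (Complex.I * Real.pi * ((s : ℝ) + lam - 1)) *
          ((ω ^ ((s : ℝ) + lam - 1) : ℝ) : ℂ))
    (hint1 : IntegrableOn
      (fun ω : ℝ => g ω * ((ω ^ 2 * Real.exp (-(a * ω) ^ 2 / 2) : ℝ) : ℂ)) (Ioi 0))
    (hint2 : IntegrableOn
      (fun ω : ℝ => g (-ω) * ((ω ^ 2 * Real.exp (-(a * ω) ^ 2 / 2) : ℝ) : ℂ)) (Ioi 0))
    (hint3 : IntegrableOn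
      (fun ω : ℝ => Gp ω * ((ω ^ 2 * Real.exp (-(a * ω) ^ 2 / 2) : ℝ) : ℂ)) (Ioi 0))
    (hint4 : IntegrableOn
      (fun ω : ℝ => Gm ω * ((ω ^ 2 * Real.exp (-(a * ω) ^ 2 / 2) : ℝ) : ℂ)) (Ioi 0)) :
    ((Real.sqrt a / (2 * Real.pi) : ℝ) : ℂ) *
        (∫ ω : ℝ, Complex.exp (Complex.I * b * ω) * fhat ω *
          ((Real.sqrt (2 * Real.pi) * (a * ω) ^ 2 * Real.exp (-(a * ω) ^ 2 / 2) : ℝ) : ℂ))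
      = ((1 / (2 * Real.sqrt Real.pi) : ℝ) : ℂ) *
          (∑ s ∈ Finset.range n, d s *
            ((2 ^ (((s : ℝ) + lam + 1) / 2) * Real.Gamma (((s : ℝ) + lam + 2) / 2) : ℝ) : ℂ) *
            (1 + Complex.exp (Complex.I * Real.pi * ((s : ℝ) + lam - 1))) *
            ((a ^ (-(s : ℝ) - lam + 1 / 2) : ℝ) : ℂ))
        + ((Real.sqrt a / Real.sqrt (2 * Real.pi) : ℝ) : ℂ) *
            ∫ ω in Ioi (0 : ℝ),
              (Gp ω + Gm ω) * (((a * ω) ^ 2 * Real.exp (-(a * ω) ^ 2 / 2) : ℝ) : ℂ) := by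
  set E : ℕ → ℂ := fun s => Complex.exp (Complex.I * Real.pi * ((s : ℝ) + lam - 1))
  have hcoef : Real.sqrt a / (2 * Real.pi) * (Real.sqrt (2 * Real.pi) * a ^ 2)
      = Real.sqrt a / Real.sqrt (2 * Real.pi) * a ^ 2 := by
    rw [← mul_assoc, div_mul_eq_mul_div, mul_div_assoc, Real.sqrt_div_self', mul_one_div]
  have hsum : ∀ s ∈ Finset.range n,
      ((Real.sqrt a / Real.sqrt (2 * Real.pi) * a ^ 2 : ℝ) : ℂ) *
        (d s * E s * ((2 ^ (((s : ℝ) + lam) / 2) *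
          Real.Gamma (((s : ℝ) + lam + 2) / 2) * a ^ (-((s : ℝ) + lam + 2)) : ℝ) : ℂ)
        + d s * ((2 ^ (((s : ℝ) + lam) / 2) *
          Real.Gamma (((s : ℝ) + lam + 2) / 2) * a ^ (-((s : ℝ) + lam + 2)) : ℝ) : ℂ))
      = ((1 / (2 * Real.sqrt Real.pi) : ℝ) : ℂ) * (d s *
          ((2 ^ (((s : ℝ) + lam + 1) / 2) * Real.Gamma (((s : ℝ) + lam + 2) / 2) : ℝ) : ℂ) *
          (1 + E s) * ((a ^ (-(s : ℝ) - lam + 1 / 2) : ℝ) : ℂ)) := fun s _ => by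
    have hs := congrArg ((↑) : ℝ → ℂ) (sqrt_div_sqrt_two_pi_mul_sq_mul_rpow ha ((s : ℝ) + lam)
      (Real.Gamma (((s : ℝ) + lam + 2) / 2)))
    rw [show -(s : ℝ) - lam + 1 / 2 = -((s : ℝ) + lam) + 1 / 2 by ring]
    push_cast at hs ⊢
    linear_combination (d s * (1 + E s)) * hs
  have herr : ∀ x : ℝ, (Gp x + Gm x) * (((a * x) ^ 2 * Real.exp (-(a * x) ^ 2 / 2) : ℝ) : ℂ)
      = ((a ^ 2 : ℝ) : ℂ) * (Gp x * ((x ^ 2 * Real.exp (-(a * x) ^ 2 / 2) : ℝ) : ℂ)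
        + Gm x * ((x ^ 2 * Real.exp (-(a * x) ^ 2 / 2) : ℝ) : ℂ)) := fun x => by
    push_cast; ring
  simp only [← hg]
  rw [integral_mul_mexicanHat_eq hint1 hint2,
    setIntegral_Ioi_mul_sq_mul_exp_eq_remainder_add_sum ha (by linarith) hGp hint3,
    setIntegral_Ioi_mul_sq_mul_exp_eq_remainder_add_sum ha (by linarith) hGm hint4,
    ← mul_assoc, ← ofReal_mul, hcoef, Finset.mul_sum, ← Finset.sum_congr rfl hsum,
    integral_congr_ae (ae_of_all _ herr), integral_const_mul, integral_add hint3 hint4]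
  rw [← Finset.mul_sum, Finset.sum_add_distrib, ofReal_mul]
  ring

/-- Asymptotic expansion with error term for the Mexican hat wavelet transform, in its
Fourier-domain form: with `g(ω) = e^{ibω} f̂(ω)`,
`(√a/2π) ∫_ℝ g(ω) √(2π) (aω)² e^{−(aω)²/2} dω
  = (1/(2√π)) Σ_{s<n} d_s 2^{(s+λ+1)/2} Γ((s+λ+2)/2) (1 + e^{iπ(s+λ−1)}) a^{−s−λ+1/2} + δ_n(a)`,
where `δ_n(a) = (√a/√(2π)) ∫_0^∞ (G₊(ω)+G₋(ω)) (aω)² e^{−(aω)²/2} dω`. -/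
theorem mexicanHat_wavelet_expansion (b a lam : ℝ) (ha : 0 < a)
    (hlam0 : 0 < lam) (hlam1 : lam ≤ 1) (n : ℕ) (hn : 0 < n) (d : ℕ → ℂ)
    (fhat : ℝ → ℂ) (hfhat : Measurable fhat)
    (g Gp Gm : ℝ → ℂ)
    (hg : ∀ ω : ℝ, g ω = Complex.exp (Complex.I * b * ω) * fhat ω)
    (hGp : ∀ ω ∈ Ioi (0 : ℝ),
      Gp ω = g ω - ∑ s ∈ Finset.range n, d s * ((ω ^ ((s : ℝ) + lam - 1) : ℝ) : ℂ))
    (hGm : ∀ ω ∈ Ioi (0 : ℝ),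
      Gm ω = g (-ω) - ∑ s ∈ Finset.range n,
        d s * Complex.exp (Complex.I * Real.pi * ((s : ℝ) + lam - 1)) *
          ((ω ^ ((s : ℝ) + lam - 1) : ℝ) : ℂ))
    (hint1 : IntegrableOn
      (fun ω : ℝ => g ω * ((ω ^ 2 * Real.exp (-(a * ω) ^ 2 / 2) : ℝ) : ℂ)) (Ioi 0))
    (hint2 : IntegrableOn
      (fun ω : ℝ => g (-ω) * ((ω ^ 2 * Real.exp (-(a * ω) ^ 2 / 2) : ℝ) : ℂ)) (Ioi 0))
    (hint3 : IntegrableOn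
      (fun ω : ℝ => Gp ω * ((ω ^ 2 * Real.exp (-(a * ω) ^ 2 / 2) : ℝ) : ℂ)) (Ioi 0))
    (hint4 : IntegrableOn
      (fun ω : ℝ => Gm ω * ((ω ^ 2 * Real.exp (-(a * ω) ^ 2 / 2) : ℝ) : ℂ)) (Ioi 0)) :
    ((Real.sqrt a / (2 * Real.pi) : ℝ) : ℂ) *
        (∫ ω : ℝ, Complex.exp (Complex.I * b * ω) * fhat ω *
          ((Real.sqrt (2 * Real.pi) * (a * ω) ^ 2 * Real.exp (-(a * ω) ^ 2 / 2) : ℝ) : ℂ))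
      = ((1 / (2 * Real.sqrt Real.pi) : ℝ) : ℂ) *
          (∑ s ∈ Finset.range n, d s *
            ((2 ^ (((s : ℝ) + lam + 1) / 2) * Real.Gamma (((s : ℝ) + lam + 2) / 2) : ℝ) : ℂ) *
            (1 + Complex.exp (Complex.I * Real.pi * ((s : ℝ) + lam - 1))) *
            ((a ^ (-(s : ℝ) - lam + 1 / 2) : ℝ) : ℂ))
        + ((Real.sqrt a / Real.sqrt (2 * Real.pi) : ℝ) : ℂ) *
            ∫ ω in Ioi (0 : ℝ),
              (Gp ω + Gm ω) * (((a * ω) ^ 2 * Real.exp (-(a * ω) ^ 2 / 2) : ℝ) : ℂ) :=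
  mexicanHat_wavelet_expansion_general b a lam ha hlam0 n d fhat g Gp Gm hg hGp hGm hint1 hint2
    hint3 hint4
end

section
/- For every z ∈ ℂ with 0 < Re z < 1, the generalized Mellin transform of e^{it} satisfies lim_{ε→0+} ∫_0^∞ t^{z−1} e^{it} e^{−εt} dt = e^{iπz/2} Γ(z). -/
open MeasureTheory Filter Set Complex
open scoped Topology

/-!
For real `s > 0` the substitution `t ↦ t / s` in Euler's integral gives
`∫₀^∞ t^(z-1) e^(-s t) dt = (1/s)^z Γ(z)`. Both sides are holomorphic in `s` on the half-plane
`Re s > 0` (the left side by differentiation under the integral sign), so they agree there by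
the identity theorem. Since `t^(z-1) e^(it) e^(-εt) = t^(z-1) e^(-(ε - i) t)` and `s ↦ (1/s)^z`
is continuous at `s = -i` (where `1/s = i` is off the branch cut), letting `ε → 0⁺` gives
`i^z Γ(z) = e^(iπz/2) Γ(z)`.
-/

lemma integrableOn_rpow_mul_exp_neg_mul {p b : ℝ} (hp : -1 < p) (hb : 0 < b) :
    IntegrableOn (fun t : ℝ => t ^ p * Real.exp (-(b * t))) (Ioi 0) := by
  simpa [neg_mul] using integrableOn_rpow_mul_exp_neg_mul_rpow hp zero_lt_one hb

section MellinExpNegMul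

variable {a s : ℂ}

lemma norm_cpow_smul_exp_neg_mul {t : ℝ} (ht : 0 < t) :
    ‖(t : ℂ) ^ (a - 1) • exp (-(s * t))‖ = t ^ (a.re - 1) * Real.exp (-(s.re * t)) := by
  simp [norm_cpow_eq_rpow_re_of_pos ht, Complex.norm_exp]

lemma continuousOn_cpow_smul_exp_neg_mul :
    ContinuousOn (fun t : ℝ => (t : ℂ) ^ (a - 1) • exp (-(s * t))) (Ioi 0) := fun t ht =>
  ((continuousAt_ofReal_cpow_const t _ (Or.inr (ne_of_gt ht))).smul
    (by fun_prop)).continuousWithinAt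

lemma mellinConvergent_exp_neg_mul (ha : 0 < a.re) (hs : 0 < s.re) :
    MellinConvergent (fun t : ℝ => exp (-(s * t))) a := by
  refine Integrable.mono' (integrableOn_rpow_mul_exp_neg_mul (p := a.re - 1) (by linarith) hs)
    (continuousOn_cpow_smul_exp_neg_mul.aestronglyMeasurable measurableSet_Ioi) ?_
  filter_upwards [ae_restrict_mem measurableSet_Ioi] with t ht
  exact (norm_cpow_smul_exp_neg_mul ht).le

lemma hasDerivAt_mellin_exp_neg_mul (ha : 0 < a.re) (hs : 0 < s.re) :
    HasDerivAt (fun w : ℂ => mellin (fun t : ℝ => exp (-(w * t))) a)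
      (-mellin (fun t : ℝ => exp (-(s * t))) (a + 1)) s := by
  have hball : ∀ w ∈ Metric.ball s (s.re / 2), s.re / 2 < w.re := fun w hw => by
    have := (abs_re_le_norm (w - s)).trans_lt (mem_ball_iff_norm.mp hw)
    rw [sub_re, abs_lt] at this
    linarith
  have ha' : 0 < (a + 1).re := by rw [add_re, one_re]; linarith
  have key := hasDerivAt_integral_of_dominated_loc_of_deriv_le
    (F := fun w (t : ℝ) => (t : ℂ) ^ (a - 1) • exp (-(w * t)))
    (F' := fun w (t : ℝ) => -((t : ℂ) ^ (a + 1 - 1) • exp (-(w * t))))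
    (bound := fun t : ℝ => t ^ a.re * Real.exp (-(s.re / 2 * t)))
    (Metric.ball_mem_nhds s (half_pos hs))
    (Eventually.of_forall fun _ =>
      continuousOn_cpow_smul_exp_neg_mul.aestronglyMeasurable measurableSet_Ioi)
    (mellinConvergent_exp_neg_mul ha hs)
    (mellinConvergent_exp_neg_mul ha' hs).neg.aestronglyMeasurable ?_
    (integrableOn_rpow_mul_exp_neg_mul (by linarith) (half_pos hs)) ?_
  · simpa [mellin, integral_neg] using key.2
  · filter_upwards [ae_restrict_mem measurableSet_Ioi] with t (ht : 0 < t) w hw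
    rw [norm_neg, norm_cpow_smul_exp_neg_mul ht, add_re, one_re, add_sub_cancel_right]
    have := hball w hw
    gcongr
  · filter_upwards [ae_restrict_mem measurableSet_Ioi] with t (ht : 0 < t) w _
    have hexp : HasDerivAt (fun w : ℂ => exp (-(w * t))) (exp (-(w * t)) * -t) w :=
      ((hasDerivAt_id w).mul_const (t : ℂ)).neg.cexp.congr_deriv (by simp)
    refine (hexp.const_mul ((t : ℂ) ^ (a - 1))).congr_deriv ?_
    have ht0 : (t : ℂ) ≠ 0 := ofReal_ne_zero.mpr ht.ne'
    rw [add_sub_cancel_right, smul_eq_mul, cpow_sub _ _ ht0, cpow_one]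
    field_simp

lemma differentiableOn_mellin_exp_neg_mul (ha : 0 < a.re) :
    DifferentiableOn ℂ (fun w : ℂ => mellin (fun t : ℝ => exp (-(w * t))) a) {w | 0 < w.re} :=
  fun _ hw => (hasDerivAt_mellin_exp_neg_mul ha hw).differentiableAt.differentiableWithinAt

lemma one_div_mem_slitPlane (hs : 0 < s.re) : 1 / s ∈ slitPlane := by
  have hs0 : s ≠ 0 := fun h => by simp [h] at hs
  rw [mem_slitPlane_iff, one_div, inv_re]
  exact Or.inl (div_pos hs (normSq_pos.mpr hs0))

lemma differentiableAt_one_div_cpow (hs : 1 / s ∈ slitPlane) :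
    DifferentiableAt ℂ (fun w : ℂ => (1 / w) ^ a) s := by
  have hs0 : s ≠ 0 := fun h => zero_notMem_slitPlane (by simp_all)
  exact ((differentiableAt_const _).div differentiableAt_id hs0).cpow_const hs

theorem mellin_exp_neg_mul (ha : 0 < a.re) (hs : 0 < s.re) :
    mellin (fun t : ℝ => exp (-(s * t))) a = (1 / s) ^ a * Gamma a := by
  have hU : IsOpen {w : ℂ | 0 < w.re} := isOpen_lt continuous_const continuous_re
  have hlhs := (differentiableOn_mellin_exp_neg_mul ha).analyticOnNhd hU
  have hrhs : AnalyticOnNhd ℂ (fun w : ℂ => (1 / w) ^ a * Gamma a) {w | 0 < w.re} :=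
    DifferentiableOn.analyticOnNhd (fun w hw =>
      ((differentiableAt_one_div_cpow (one_div_mem_slitPlane hw)).mul_const _)
        |>.differentiableWithinAt) hU
  have hreal : ∀ᶠ x : ℝ in 𝓝[>] 1,
      mellin (fun t : ℝ => exp (-((x : ℂ) * t))) a = (1 / (x : ℂ)) ^ a * Gamma a := by
    filter_upwards [self_mem_nhdsWithin] with x (hx : 1 < x)
    rw [← integral_cpow_mul_exp_neg_mul_Ioi ha (by linarith), mellin]
    simp_rw [smul_eq_mul]
  have hofReal : Tendsto ((↑) : ℝ → ℂ) (𝓝[>] 1) (𝓝[≠] ((1 : ℝ) : ℂ)) :=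
    continuous_ofReal.continuousWithinAt.tendsto_nhdsWithin fun x (hx : 1 < x) => by
      simpa using hx.ne'
  exact hlhs.eqOn_of_preconnected_of_frequently_eq hrhs
    (convex_halfSpace_re_gt 0).isPreconnected (by simp)
    (hofReal.frequently hreal.frequently) hs

end MellinExpNegMul

lemma I_cpow (z : ℂ) : I ^ z = exp (I * Real.pi * z / 2) := by
  rw [cpow_def_of_ne_zero I_ne_zero, log_I]
  ring_nf

theorem mellin_exp_I_general (z : ℂ) (h0 : 0 < z.re) :
    Tendsto
      (fun ε : ℝ => ∫ t in Ioi (0 : ℝ),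
        (t : ℂ) ^ (z - 1) * Complex.exp (Complex.I * t) * Complex.exp (-(ε : ℂ) * t))
      (𝓝[>] (0 : ℝ))
      (𝓝 (Complex.exp (Complex.I * Real.pi * z / 2) * Complex.Gamma z)) := by
  have hI : 1 / -I = I := by rw [one_div, inv_neg, inv_I, neg_neg]
  have hcont : ContinuousAt (fun ε : ℝ => (1 / ((ε : ℂ) - I)) ^ z * Gamma z) 0 :=
    ((differentiableAt_one_div_cpow (by simp [hI, mem_slitPlane_iff])).continuousAt.comp
      (by fun_prop : Continuous fun ε : ℝ => (ε : ℂ) - I).continuousAt).mul_const _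
  have hlim := hcont.tendsto.mono_left (nhdsWithin_le_nhds (s := Ioi 0))
  rw [ofReal_zero, zero_sub, hI, I_cpow] at hlim
  refine hlim.congr' ?_
  filter_upwards [self_mem_nhdsWithin] with ε (hε : 0 < ε)
  rw [← mellin_exp_neg_mul h0 (by simpa using hε), mellin]
  refine setIntegral_congr_fun measurableSet_Ioi fun t _ => ?_
  rw [smul_eq_mul, mul_assoc, ← exp_add]
  ring_nf

/-- The generalized Mellin transform of `e^{it}` (with `p = 1`):
for `0 < Re z < 1`, `lim_{ε→0+} ∫_0^∞ t^{z−1} e^{it} e^{−εt} dt = e^{iπz/2} Γ(z)`. -/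
theorem mellin_exp_I (z : ℂ) (h0 : 0 < z.re) (h1 : z.re < 1) :
    Tendsto
      (fun ε : ℝ => ∫ t in Ioi (0 : ℝ),
        (t : ℂ) ^ (z - 1) * Complex.exp (Complex.I * t) * Complex.exp (-(ε : ℂ) * t))
      (𝓝[>] (0 : ℝ))
      (𝓝 (Complex.exp (Complex.I * Real.pi * z / 2) * Complex.Gamma z)) :=
  mellin_exp_I_general z h0
end
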